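/- For all integers a, d, c, the matrix H satisfies H² = I, H R H = R⁻¹, and H T⁻¹ H = T, where I is the 6×6 identity matrix (so conjugation by the involution H inverts both R and T). -/

import Mathlib

open Matrix

def Umat (a d c : ℤ) : Matrix (Fin 6) (Fin 6) ℤ :=
  !![1,1,0,0,0,0; 0,1,1,0,0,0; 0,0,1,0,0,0; -a,-a,0,1,0,0; 0,d,d,-1,1,0; 0,0,-c,1,-1,1]

/-- The matrix `T`: the identity with an extra `1` in position `(3,6)` (i.e. row 3, column 6). -/
def Tmat : Matrix (Fin 6) (Fin 6) ℤ :=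
  !![1,0,0,0,0,0; 0,1,0,0,0,0; 0,0,1,0,0,1; 0,0,0,1,0,0; 0,0,0,0,1,0; 0,0,0,0,0,1]

def Hmat (d : ℤ) : Matrix (Fin 6) (Fin 6) ℤ :=
  !![1,1,0,0,0,0; 0,-1,0,0,0,0; 0,0,1,0,0,-1; 0,0,0,-1,0,0; 0,-d,0,-1,1,0; 0,0,0,0,0,-1]

/-!
`R = H · (H R)` and `T = H · (H T)` are products of two involutions, and conjugating such a product
by its first factor inverts it. So everything reduces to the three matrix identities
`H² = (H R)² = (H T)² = 1`, checked entrywise.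
-/

namespace Matrix

variable {n R : Type*} [Fintype n] [DecidableEq n] [CommRing R] {h r : Matrix n n R}

theorem inv_eq_mul_mul_of_mul_mul_self_eq_one (hr : h * r * (h * r) = 1) : r⁻¹ = h * r * h :=
  inv_eq_left_inv (by simpa only [Matrix.mul_assoc] using hr)

theorem mul_inv_mul_eq_of_mul_self_eq_one (hh : h * h = 1) (hr : h * r * (h * r) = 1) :
    h * r⁻¹ * h = r :=
  calc h * r⁻¹ * h = h * h * r * (h * h) := by
        rw [inv_eq_mul_mul_of_mul_mul_self_eq_one hr]; simp only [Matrix.mul_assoc]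
    _ = r := by rw [hh, Matrix.one_mul, Matrix.mul_one]

end Matrix

theorem Hmat_mul_self (d : ℤ) : Hmat d * Hmat d = 1 := by
  ext i j
  fin_cases i <;> fin_cases j <;> simp [Hmat, Matrix.mul_apply, Fin.sum_univ_succ]

theorem Hmat_mul_Tmat_mul_self (d : ℤ) : Hmat d * Tmat * (Hmat d * Tmat) = 1 := by
  ext i j
  fin_cases i <;> fin_cases j <;> simp [Hmat, Tmat, Matrix.mul_apply, Fin.sum_univ_succ]

theorem Hmat_mul_Tmat_mul_Umat_mul_self (a d c : ℤ) :
    Hmat d * (Tmat * Umat a d c) * (Hmat d * (Tmat * Umat a d c)) = 1 := by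
  ext i j
  fin_cases i <;> fin_cases j <;> simp [Hmat, Tmat, Umat, Matrix.mul_apply, Fin.sum_univ_succ] <;> ring

/-- For all integers `a, d, c`, with `R = T·U`: `H² = I`, `H R H = R⁻¹` and
`H T⁻¹ H = T`; so conjugation by the involution `H` inverts both `R` and `T`. -/
theorem H_inverts_R_and_T (a d c : ℤ) :
    Hmat d ^ 2 = 1 ∧
    Hmat d * (Tmat * Umat a d c) * Hmat d = (Tmat * Umat a d c)⁻¹ ∧
    Hmat d * Tmat⁻¹ * Hmat d = Tmat :=
  ⟨by rw [sq, Hmat_mul_self],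
    (Matrix.inv_eq_mul_mul_of_mul_mul_self_eq_one (Hmat_mul_Tmat_mul_Umat_mul_self a d c)).symm,
    Matrix.mul_inv_mul_eq_of_mul_self_eq_one (Hmat_mul_self d) (Hmat_mul_Tmat_mul_self d)⟩
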